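/- In T_X = ω × L_X (lexicographic order), a point has a set of strict predecessors of cofinality ℵ₁ if and only if it is of the form (n, (0,0)) with n ≥ 1. -/

import Mathlib

open Ordinal Cardinal

noncomputable def omega1' : Ordinal := (Cardinal.aleph 1).ord

lemma omega1'_pos : (0 : Ordinal) < omega1' := by
  simpa [omega1'] using Ordinal.omega_pos 1

/-- The underlying set of the linear order `L_X`. -/
def LX (X : Set Ordinal) : Type 1 :=
  {p : {o : Ordinal // o < omega1'} × ℕ // p.1.1 ∉ X → p.2 = 0}

/-- The order on `L_X`. -/
def LXlt (X : Set Ordinal) : LX X → LX X → Prop := fun p q =>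
  p.1.1.1 < q.1.1.1 ∨
  (p.1.1 = q.1.1 ∧ p.1.2 = 0 ∧ 0 < q.1.2) ∨
  (p.1.1 = q.1.1 ∧ q.1.2 < p.1.2 ∧ 0 < q.1.2)

/-- `T_X = ω × L_X`, ordered lexicographically. -/
def TX (X : Set Ordinal) : Type 1 := ℕ × LX X

/-- The lexicographic order on `T_X`. -/
def TXlt (X : Set Ordinal) : TX X → TX X → Prop := fun p q =>
  p.1 < q.1 ∨ (p.1 = q.1 ∧ LXlt X p.2 q.2)

/-- The bottom point `(0,0)` of `L_X`. -/
def LXzero (X : Set Ordinal) : LX X := ⟨(⟨0, omega1'_pos⟩, 0), fun _ => rfl⟩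

/-!
For `n ≥ 1`, the predecessors of `(n, (0, 0))` end with the copy `{n - 1} × L_X`, whose ordinal
coordinates run through all of `ω₁`; since `ℵ₁` is regular, a countable set of predecessors has
bounded ordinal coordinates and so is not cofinal, while `{(n - 1, (β, 0)) | β < ω₁}` is cofinal.
Every other point has a countable cofinal set of predecessors: `(0, (0, 0))` has none,
`(n, (α, m))` with `m > 0` has the immediate predecessor `(n, (α, m + 1))`, and below `(n, (α, 0))`
with `α > 0` the largest points `(n, (β, 0 or 1))`, `β < α`, of the countably many blocks are cofinal.
-/

lemma omega1'_eq_omega_one : omega1' = ω₁ := ord_aleph 1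

lemma succ_lt_omega1' {α : Ordinal} (hα : α < omega1') : Order.succ α < omega1' := by
  rw [omega1'_eq_omega_one] at hα ⊢
  exact (isSuccLimit_omega 1).succ_lt hα

lemma countable_Iio_of_lt_omega1' {α : Ordinal} (hα : α < omega1') : (Set.Iio α).Countable := by
  rw [← le_aleph0_iff_set_countable, Cardinal.mk_Iio_ordinal, lift_le_aleph0, ← lt_aleph_one_iff]
  exact lt_ord.1 hα

lemma mk_Iio_omega1' : #(Set.Iio omega1') = ℵ₁ := by
  rw [Cardinal.mk_Iio_ordinal, omega1', card_ord, lift_aleph, Ordinal.lift_one]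

lemma exists_lt_omega1'_forall_lt {ι : Type*} [Countable ι] (f : ι → Ordinal)
    (hf : ∀ i, f i < omega1') : ∃ β < omega1', ∀ i, f i < β := by
  have hsup : ⨆ i, f i < omega1' := by
    rw [omega1'_eq_omega_one] at hf ⊢
    exact iSup_lt_omega_one hf
  refine ⟨Order.succ (⨆ i, f i), succ_lt_omega1' hsup,
    fun i => Order.lt_succ_iff.2 (le_ciSup ⟨omega1', ?_⟩ i)⟩
  rintro _ ⟨j, rfl⟩
  exact (hf j).le

namespace LX

variable {X : Set Ordinal}

def ord (p : LX X) : Ordinal := p.1.1.1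

def idx (p : LX X) : ℕ := p.1.2

lemma ord_lt_omega1' (p : LX X) : p.ord < omega1' := p.1.1.2

lemma idx_eq_zero_of_notMem (p : LX X) : p.ord ∉ X → p.idx = 0 := p.2

lemma ext {p q : LX X} (hord : p.ord = q.ord) (hidx : p.idx = q.idx) : p = q :=
  Subtype.ext (Prod.ext (Subtype.ext hord) hidx)

def ofOrd (β : Ordinal) (hβ : β < omega1') : LX X := ⟨(⟨β, hβ⟩, 0), fun _ => rfl⟩

/-- The largest point of `L_X` with ordinal coordinate `β`. -/
noncomputable def top (β : Ordinal) (hβ : β < omega1') : LX X :=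
  open Classical in ⟨(⟨β, hβ⟩, if β ∈ X then 1 else 0), fun h => if_neg h⟩

/-- The immediate predecessor `(α, m + 1)` of `(α, m)`, `m > 0`. -/
def pred (p : LX X) (hp : 0 < p.idx) : LX X :=
  ⟨(p.1.1, p.idx + 1), fun h => absurd (p.idx_eq_zero_of_notMem h) hp.ne'⟩

lemma pred_idx (p : LX X) (hp : 0 < p.idx) : (p.pred hp).idx = p.idx + 1 := rfl

end LX

open LX

section LXlt

variable {X : Set Ordinal}

lemma LXlt_iff {p q : LX X} :
    LXlt X p q ↔ p.ord < q.ord ∨ (p.ord = q.ord ∧ p.idx = 0 ∧ 0 < q.idx) ∨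
      (p.ord = q.ord ∧ q.idx < p.idx ∧ 0 < q.idx) := by
  simp only [LXlt, Subtype.ext_iff]
  rfl

lemma LXlt.ord_le {p q : LX X} (h : LXlt X p q) : p.ord ≤ q.ord := by
  rcases LXlt_iff.1 h with h | ⟨h, -⟩ | ⟨h, -⟩
  exacts [h.le, h.le, h.le]

lemma not_LXlt_LXzero (p : LX X) : ¬ LXlt X p (LXzero X) := by
  rw [LXlt_iff]
  rintro (h | ⟨-, -, h⟩ | ⟨-, -, h⟩)
  · exact not_lt_zero h
  all_goals exact lt_irrefl 0 h

lemma eq_top_or_LXlt_top (p : LX X) :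
    p = top p.ord p.ord_lt_omega1' ∨ LXlt X p (top p.ord p.ord_lt_omega1') := by
  classical
  rw [LXlt_iff]
  by_cases hX : p.ord ∈ X
  · have htop : (top p.ord p.ord_lt_omega1' : LX X).idx = 1 := if_pos hX
    rcases lt_trichotomy p.idx 1 with h | h | h
    · exact Or.inr (Or.inr (Or.inl ⟨rfl, by omega, by omega⟩))
    · exact Or.inl (LX.ext rfl (h.trans htop.symm))
    · exact Or.inr (Or.inr (Or.inr ⟨rfl, by omega, by omega⟩))
  · exact Or.inl (LX.ext rfl ((p.idx_eq_zero_of_notMem hX).trans (if_neg hX).symm))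

end LXlt

section TX

variable {X : Set Ordinal}

lemma TXlt_LXzero_iff {n : ℕ} {s : TX X} : TXlt X s (n, LXzero X) ↔ s.1 < n :=
  ⟨fun h => h.resolve_right fun h => not_LXlt_LXzero s.2 h.2, Or.inl⟩

lemma ord_le_of_TXle {s x : TX X} (h : s = x ∨ TXlt X s x) (hfst : x.1 ≤ s.1) :
    s.2.ord ≤ x.2.ord := by
  rcases h with rfl | h | h
  exacts [le_rfl, absurd hfst h.not_ge, h.2.ord_le]

def IsCofinalBelow (X : Set Ordinal) (t : TX X) (C : Set (TX X)) : Prop :=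
  C ⊆ {s | TXlt X s t} ∧ ∀ s, TXlt X s t → ∃ x ∈ C, s = x ∨ TXlt X s x

lemma isCofinalBelow_empty : IsCofinalBelow X (0, LXzero X) ∅ :=
  ⟨Set.empty_subset _, fun _ hs => absurd (TXlt_LXzero_iff.1 hs) (Nat.not_lt_zero _)⟩

lemma isCofinalBelow_singleton_pred (t : TX X) (ht : 0 < t.2.idx) :
    IsCofinalBelow X t {(t.1, t.2.pred ht)} := by
  have hpos : 0 < (t.2.pred ht).idx := (pred_idx _ ht).symm ▸ t.2.idx.succ_pos
  refine ⟨Set.singleton_subset_iff.2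
    (Or.inr ⟨rfl, LXlt_iff.2 (Or.inr (Or.inr ⟨rfl, t.2.idx.lt_succ_self, ht⟩))⟩),
    fun s hs => ⟨_, rfl, ?_⟩⟩
  rcases hs with hs | ⟨hfst, hs⟩
  · exact Or.inr (Or.inl hs)
  rcases LXlt_iff.1 hs with h | ⟨hord, hidx, -⟩ | ⟨hord, hidx, -⟩
  · exact Or.inr (Or.inr ⟨hfst, LXlt_iff.2 (Or.inl h)⟩)
  · exact Or.inr (Or.inr ⟨hfst, LXlt_iff.2 (Or.inr (Or.inl ⟨hord, hidx, hpos⟩))⟩)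
  · rcases (Nat.succ_le_of_lt hidx).eq_or_lt with h | h
    · exact Or.inl (Prod.ext hfst (LX.ext hord ((pred_idx _ ht).trans h).symm))
    · exact Or.inr (Or.inr ⟨hfst, LXlt_iff.2 (Or.inr (Or.inr ⟨hord, h, hpos⟩))⟩)

lemma isCofinalBelow_range_top (t : TX X) (hidx : t.2.idx = 0) (hord : 0 < t.2.ord) :
    IsCofinalBelow X t
      (Set.range fun β : Set.Iio t.2.ord => (t.1, top β (β.2.trans t.2.ord_lt_omega1'))) := by
  refine ⟨?_, fun s hs => ?_⟩
  · rintro _ ⟨β, rfl⟩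
    exact Or.inr ⟨rfl, LXlt_iff.2 (Or.inl β.2)⟩
  rcases hs with hs | ⟨hfst, hs⟩
  · exact ⟨_, ⟨⟨0, hord⟩, rfl⟩, Or.inr (Or.inl hs)⟩
  have hlt : s.2.ord < t.2.ord := by
    rcases LXlt_iff.1 hs with h | ⟨-, -, h⟩ | ⟨-, -, h⟩
    exacts [h, absurd hidx h.ne', absurd hidx h.ne']
  refine ⟨_, ⟨⟨s.2.ord, hlt⟩, rfl⟩, ?_⟩
  rcases eq_top_or_LXlt_top s.2 with h | h
  · exact Or.inl (Prod.ext hfst h)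
  · exact Or.inr (Or.inr ⟨hfst, h⟩)

lemma exists_countable_isCofinalBelow (t : TX X) (ht : ∀ n : ℕ, t ≠ (n + 1, LXzero X)) :
    ∃ C, IsCofinalBelow X t C ∧ C.Countable := by
  rcases Nat.eq_zero_or_pos t.2.idx with hidx | hidx
  · rcases eq_or_ne t.2.ord 0 with hord | hord
    · have ht0 : t = (0, LXzero X) := by
        obtain ⟨_ | n, p⟩ := t
        · exact Prod.ext rfl (LX.ext hord hidx)
        · exact (ht n (Prod.ext rfl (LX.ext hord hidx))).elim
      exact ⟨∅, ht0 ▸ isCofinalBelow_empty, Set.countable_empty⟩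
    · have := (countable_Iio_of_lt_omega1' t.2.ord_lt_omega1').to_subtype
      exact ⟨_, isCofinalBelow_range_top t hidx (pos_iff_ne_zero.2 hord), Set.countable_range _⟩
  · exact ⟨_, isCofinalBelow_singleton_pred t hidx, Set.countable_singleton _⟩

lemma isCofinalBelow_range_ofOrd (n : ℕ) :
    IsCofinalBelow X (n + 1, LXzero X)
      (Set.range fun β : Set.Iio omega1' => (n, ofOrd β β.2)) := by
  refine ⟨?_, fun s hs => ?_⟩
  · rintro _ ⟨β, rfl⟩
    exact TXlt_LXzero_iff.2 n.lt_succ_self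
  refine ⟨_, ⟨⟨Order.succ s.2.ord, succ_lt_omega1' s.2.ord_lt_omega1'⟩, rfl⟩, ?_⟩
  rcases (Nat.lt_succ_iff.1 (TXlt_LXzero_iff.1 hs)).lt_or_eq with h | h
  · exact Or.inr (Or.inl h)
  · exact Or.inr (Or.inr ⟨h, LXlt_iff.2 (Or.inl (Order.lt_succ s.2.ord))⟩)

lemma mk_range_ofOrd (n : ℕ) :
    #(Set.range fun β : Set.Iio omega1' => ((n, ofOrd β β.2) : TX X)) = ℵ₁ := by
  refine (mk_range_eq _ fun β γ h => Subtype.ext ?_).trans mk_Iio_omega1'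
  exact congrArg (fun s : TX X => s.2.ord) h

/-- A countable `C` has ordinal coordinates bounded by some `β < ω₁`, and then `C` does not
dominate the predecessor `(n, (β, 0))`. -/
lemma aleph_one_le_mk_of_isCofinalBelow {n : ℕ} {C : Set (TX X)}
    (hC : IsCofinalBelow X (n + 1, LXzero X) C) : ℵ₁ ≤ #C := by
  rw [← not_lt, lt_aleph_one_iff, le_aleph0_iff_set_countable]
  intro hcount
  have := hcount.to_subtype
  obtain ⟨β, hβ, hbound⟩ :=
    exists_lt_omega1'_forall_lt (fun x : C => x.1.2.ord) fun x => x.1.2.ord_lt_omega1'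
  obtain ⟨x, hxC, hx⟩ := hC.2 (n, ofOrd β hβ) (TXlt_LXzero_iff.2 n.lt_succ_self)
  have hfst : x.1 ≤ n := Nat.lt_succ_iff.1 (TXlt_LXzero_iff.1 (hC.1 hxC))
  exact (ord_le_of_TXle hx hfst).not_gt (hbound ⟨x, hxC⟩)

end TX

theorem stmt10_general (X : Set Ordinal) (t : TX X) :
    sInf {c : Cardinal |
        ∃ C ⊆ {s | TXlt X s t}, Cardinal.mk C = c ∧
          ∀ s, TXlt X s t → ∃ x ∈ C, s = x ∨ TXlt X s x} = Cardinal.aleph 1 ↔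
      ∃ n : ℕ, 1 ≤ n ∧ t = (n, LXzero X) := by
  constructor
  · intro hcof
    by_contra ht
    obtain ⟨C, hC, hcount⟩ :=
      exists_countable_isCofinalBelow t fun n h => ht ⟨n + 1, n.succ_pos, h⟩
    have hlt : #C < ℵ₁ := lt_aleph_one_iff.2 (le_aleph0_iff_set_countable.2 hcount)
    rw [← hcof] at hlt
    exact hlt.not_ge (csInf_le' ⟨C, hC.1, rfl, hC.2⟩)
  · rintro ⟨_, hn, rfl⟩
    obtain ⟨n, rfl⟩ := Nat.exists_eq_add_of_le' hn
    have hC := isCofinalBelow_range_ofOrd (X := X) n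
    refine IsLeast.csInf_eq ⟨?_, ?_⟩
    · exact ⟨_, hC.1, mk_range_ofOrd n, hC.2⟩
    · rintro _ ⟨C, hsub, rfl, hcof⟩
      exact aleph_one_le_mk_of_isCofinalBelow ⟨hsub, hcof⟩

/-- In `T_X`, a point has a set of strict predecessors of cofinality `ℵ₁` iff
it is of the form `(n, (0,0))` with `n ≥ 1`. -/
theorem stmt10 (X : Set Ordinal)
    (hX : ∀ o ∈ X, o < omega1' ∧ Order.IsSuccLimit o) (t : TX X) :
    sInf {c : Cardinal |
        ∃ C ⊆ {s | TXlt X s t}, Cardinal.mk C = c ∧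
          ∀ s, TXlt X s t → ∃ x ∈ C, s = x ∨ TXlt X s x} = Cardinal.aleph 1 ↔
      ∃ n : ℕ, 1 ≤ n ∧ t = (n, LXzero X) :=
  stmt10_general X t
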